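/- arXiv:1112.1392 — 3 statements merged into one kernel-verified Lean document; each statement's English description precedes it below -/
import Mathlib

section
/- Let P be a Markov transition operator on a probability space that is reversible (self-adjoint on L²(μ)) with respect to μ. Suppose f ∈ L²(μ) and there exist constants C(f) and λ > 0 such that ‖Pⁿf − μ(f)‖²_{L²(μ)} ≤ C(f)·exp(−λn) for all n ∈ ℕ. Then in fact ‖Pⁿf − μ(f)‖²_{L²(μ)} ≤ ‖f − μ(f)‖²_{L²(μ)}·exp(−λn) for all n ∈ ℕ. -/
open MeasureTheory Real

/-!
For self-adjoint `P` and centred `g = f - μ(f)`, the sequence `a n = ‖Pⁿ g‖²` satisfies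
`a n = ⟪P²ⁿ g, g⟫`, so Cauchy–Schwarz gives `a n ^ 2 ≤ a 0 * a (2 n)`. Iterating along doublings,
`a n ^ 2ᵏ ≤ a 0 ^ (2ᵏ - 1) * a (2ᵏ n) ≤ a 0 ^ (2ᵏ - 1) * C * exp (-λ 2ᵏ n)`; taking `2ᵏ`-th roots
and letting `k → ∞` removes the constant `C / a 0`.
-/

section SymmetricOperator

variable {𝕜 E : Type*} [RCLike 𝕜] [SeminormedAddCommGroup E] [InnerProductSpace 𝕜 E]
  {S : E →ₗ[𝕜] E}

theorem LinearMap.IsSymmetric.norm_apply_sq_le (hS : S.IsSymmetric) (x : E) :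
    ‖S x‖ ^ 2 ≤ ‖S (S x)‖ * ‖x‖ := by
  calc ‖S x‖ ^ 2 = RCLike.re (inner 𝕜 (S (S x)) x) := by
        rw [hS, ← inner_self_eq_norm_sq (𝕜 := 𝕜)]
    _ ≤ ‖inner 𝕜 (S (S x)) x‖ := RCLike.re_le_norm _
    _ ≤ ‖S (S x)‖ * ‖x‖ := norm_inner_le_norm _ _

theorem LinearMap.IsSymmetric.norm_pow_apply_sq_sq_le (hS : S.IsSymmetric) (x : E) (n : ℕ) :
    (‖(S ^ n) x‖ ^ 2) ^ 2 ≤ ‖x‖ ^ 2 * ‖(S ^ (2 * n)) x‖ ^ 2 := by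
  have h := (hS.pow n).norm_apply_sq_le x
  rw [← Module.End.mul_apply, ← pow_add, ← two_mul] at h
  calc (‖(S ^ n) x‖ ^ 2) ^ 2 ≤ (‖(S ^ (2 * n)) x‖ * ‖x‖) ^ 2 := by gcongr
    _ = ‖x‖ ^ 2 * ‖(S ^ (2 * n)) x‖ ^ 2 := by ring

end SymmetricOperator

theorem pow_two_pow_le_of_sq_le {b : ℕ → ℝ} (hb : ∀ n, b n ^ 2 ≤ b (2 * n)) (k n : ℕ) :
    b n ^ 2 ^ k ≤ b (2 ^ k * n) := by
  induction k generalizing n with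
  | zero => simp
  | succ k ih =>
    calc b n ^ 2 ^ (k + 1) = (b n ^ 2) ^ 2 ^ k := by rw [pow_succ', pow_mul]
      _ ≤ b (2 * n) ^ 2 ^ k := by gcongr; exact hb n
      _ ≤ b (2 ^ k * (2 * n)) := ih _
      _ = b (2 ^ (k + 1) * n) := by rw [pow_succ, mul_assoc]

theorem le_of_forall_pow_two_pow_le_mul {x y K : ℝ} (hy : 0 < y)
    (h : ∀ k : ℕ, x ^ 2 ^ k ≤ K * y ^ 2 ^ k) : x ≤ y := by
  by_contra! hyx
  have hq : 1 < x / y := (one_lt_div hy).mpr hyx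
  obtain ⟨k, hk⟩ := pow_unbounded_of_one_lt K hq
  have hk' : K < (x / y) ^ 2 ^ k :=
    hk.trans_le (pow_le_pow_right₀ hq.le Nat.lt_two_pow_self.le)
  rw [div_pow, lt_div_iff₀ (by positivity)] at hk'
  exact (h k).not_gt hk'

theorem le_pow_of_sq_le_of_le_mul_pow {b : ℕ → ℝ} {K r : ℝ} (hr : 0 < r)
    (hb : ∀ n, b n ^ 2 ≤ b (2 * n)) (hdecay : ∀ n, b n ≤ K * r ^ n) (n : ℕ) :
    b n ≤ r ^ n := by
  refine le_of_forall_pow_two_pow_le_mul (K := K) (by positivity) fun k => ?_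
  calc b n ^ 2 ^ k ≤ b (2 ^ k * n) := pow_two_pow_le_of_sq_le hb k n
    _ ≤ K * r ^ (2 ^ k * n) := hdecay _
    _ = K * (r ^ n) ^ 2 ^ k := by rw [← pow_mul, mul_comm n]

theorem le_mul_pow_of_sq_le_mul_of_le_mul_pow {a : ℕ → ℝ} {C r : ℝ} (hr : 0 < r)
    (ha₀ : 0 ≤ a 0) (ha : ∀ n, a n ^ 2 ≤ a 0 * a (2 * n)) (hdecay : ∀ n, a n ≤ C * r ^ n)
    (n : ℕ) : a n ≤ a 0 * r ^ n := by
  rcases ha₀.eq_or_lt with h0 | h0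
  · have : a n ^ 2 ≤ 0 := by simpa [← h0] using ha n
    rw [← h0, zero_mul]
    nlinarith [sq_nonneg (a n)]
  · have hb : ∀ n, (a n / a 0) ^ 2 ≤ a (2 * n) / a 0 := fun n => by
      rw [div_pow, div_le_div_iff₀ (by positivity) h0]
      nlinarith [ha n]
    have hbdecay : ∀ n, a n / a 0 ≤ C / a 0 * r ^ n := fun n => by
      rw [div_mul_eq_mul_div]
      exact div_le_div_of_nonneg_right (hdecay n) h0.le
    have := le_pow_of_sq_le_of_le_mul_pow hr hb hbdecay n
    rwa [div_le_iff₀' h0] at this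

theorem stmt_0_general {X : Type*} [MeasurableSpace X] {μ : Measure X} [IsProbabilityMeasure μ]
    (P : Lp ℝ 2 μ →L[ℝ] Lp ℝ 2 μ)
    (hsa : ∀ f g : Lp ℝ 2 μ, inner ℝ (P f) g = (inner ℝ f (P g) : ℝ))
    (hconst : ∀ c : ℝ, P ((memLp_const c).toLp (fun _ => c)) =
      (memLp_const c).toLp (fun _ => c))
    (f : Lp ℝ 2 μ) (C lam : ℝ)
    (hdecay : ∀ n : ℕ,
      ‖(P ^ n) f - (memLp_const (∫ x, f x ∂μ)).toLp (fun _ => ∫ x, f x ∂μ)‖ ^ 2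
        ≤ C * exp (-lam * n)) :
    ∀ n : ℕ,
      ‖(P ^ n) f - (memLp_const (∫ x, f x ∂μ)).toLp (fun _ => ∫ x, f x ∂μ)‖ ^ 2
        ≤ ‖f - (memLp_const (∫ x, f x ∂μ)).toLp (fun _ => ∫ x, f x ∂μ)‖ ^ 2
          * exp (-lam * n) := by
  set e : Lp ℝ 2 μ := (memLp_const (∫ x, f x ∂μ)).toLp (fun _ => ∫ x, f x ∂μ)
  have hcentered : ∀ n, (P ^ n) f - e = (P ^ n) (f - e) := fun n => by
    rw [map_sub, FunLike.coe_pow_eq_iterate, Function.iterate_fixed (hconst _)]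
  have hsym : (P : Lp ℝ 2 μ →ₗ[ℝ] Lp ℝ 2 μ).IsSymmetric := hsa
  have hexp : ∀ n : ℕ, exp (-lam * n) = exp (-lam) ^ n := fun n => by
    rw [← exp_nat_mul, mul_comm]
  intro n
  simp only [hcentered, hexp] at hdecay ⊢
  refine le_mul_pow_of_sq_le_mul_of_le_mul_pow (a := fun n => ‖(P ^ n) (f - e)‖ ^ 2)
    (exp_pos _) (sq_nonneg _) (fun m => ?_) hdecay n
  simpa [← ContinuousLinearMap.toLinearMap_pow] using hsym.norm_pow_apply_sq_sq_le (f - e) m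

/-- If `P` is a Markov operator, reversible (self-adjoint) on `L²(μ)`, preserving
constants, and `‖Pⁿ f - μ(f)‖² ≤ C(f) exp(-λ n)` for all `n`, then in fact
`‖Pⁿ f - μ(f)‖² ≤ ‖f - μ(f)‖² exp(-λ n)` for all `n`. -/
theorem stmt_0 {X : Type*} [MeasurableSpace X] {μ : Measure X} [IsProbabilityMeasure μ]
    (P : Lp ℝ 2 μ →L[ℝ] Lp ℝ 2 μ)
    (hsa : ∀ f g : Lp ℝ 2 μ, inner ℝ (P f) g = (inner ℝ f (P g) : ℝ))
    (hconst : ∀ c : ℝ, P ((memLp_const c).toLp (fun _ => c)) =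
      (memLp_const c).toLp (fun _ => c))
    (f : Lp ℝ 2 μ) (C lam : ℝ) (hlam : 0 < lam)
    (hdecay : ∀ n : ℕ,
      ‖(P ^ n) f - (memLp_const (∫ x, f x ∂μ)).toLp (fun _ => ∫ x, f x ∂μ)‖ ^ 2
        ≤ C * exp (-lam * n)) :
    ∀ n : ℕ,
      ‖(P ^ n) f - (memLp_const (∫ x, f x ∂μ)).toLp (fun _ => ∫ x, f x ∂μ)‖ ^ 2
        ≤ ‖f - (memLp_const (∫ x, f x ∂μ)).toLp (fun _ => ∫ x, f x ∂μ)‖ ^ 2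
          * exp (-lam * n) :=
  stmt_0_general P hsa hconst f C lam hdecay
end

section
/- With d̄ as above (weighted path distance with weight exp(η‖·‖)/ε), one has the two-sided bound: d̄(x,y) ≤ (‖x−y‖/ε)·exp(η(‖x‖∨‖y‖)) for all x,y; and whenever d̄(x,y) < 1, d̄(x,y) ≥ (‖x−y‖/ε)·exp(η·max(‖x‖∨‖y‖ − J, 0)) where J = ε·exp(−η·max(‖x‖∨‖y‖ − ε,0)). -/
/-
Upper bound: the straight segment from `x` to `y` is a unit-speed path of length `‖x - y‖` along
which `‖ψ‖ ≤ ‖x‖ ⊔ ‖y‖`, by convexity of the norm. For `x = y` the segment degenerates and one shows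
`d̄(x, x) = 0`: either there is no unit-speed loop at all (and `sInf ∅ = 0` in `ℝ`), or Rolle's
theorem applied to `t ↦ ⟪ψ t, ψ' 0⟫` yields an orthonormal pair, and circles of radius `ρ` through
`x` spanned by it have cost `O(ρ)`.

Lower bound: a unit-speed path is `1`-Lipschitz, so its length `T` is at least `‖x - y‖` and
`‖ψ‖ ≥ ‖x‖ ⊔ ‖y‖ - T` along it. Cost `< 1` first forces `T < ε`, then `T ≤ J`, and so every path
of cost `< 1` costs at least the claimed bound; since `d̄(x, y) < 1`, so does the infimum.
-/

open Real

/-- The weighted path distance with weight `exp(η‖·‖)/ε`: infimum over unit-speed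
`C¹` paths from `x` to `y` of `(1/ε)∫₀ᵀ exp(η‖ψ(t)‖) dt`. -/
noncomputable def pathDist {H : Type*} [NormedAddCommGroup H] [InnerProductSpace ℝ H]
    (ε η : ℝ) (x y : H) : ℝ :=
  sInf { r : ℝ | ∃ T : ℝ, 0 < T ∧ ∃ ψ ψ' : ℝ → H, ψ 0 = x ∧ ψ T = y ∧
    (∀ t ∈ Set.Icc (0:ℝ) T, HasDerivAt ψ (ψ' t) t ∧ ‖ψ' t‖ = 1) ∧
    r = (1/ε) * ∫ t in (0:ℝ)..T, exp (η * ‖ψ t‖) }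

open Set Filter Topology
open scoped RealInnerProductSpace

lemma le_csInf_of_forall_lt_imp_le {α : Type*} [ConditionallyCompleteLinearOrder α]
    {S : Set α} {a b : α} (hne : S.Nonempty) (hbdd : BddBelow S) (hlt : sInf S < b)
    (h : ∀ r ∈ S, r < b → a ≤ r) : a ≤ sInf S := by
  by_contra! hc
  obtain ⟨r, hrS, hr⟩ := (csInf_lt_iff hbdd hne).1 (lt_min hc hlt)
  exact (h r hrS (hr.trans_le (min_le_right a b))).not_gt (hr.trans_le (min_le_left a b))

section Cost

variable {H : Type*} [NormedAddCommGroup H]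

noncomputable def pathCost (ε η : ℝ) (ψ : ℝ → H) (T : ℝ) : ℝ :=
  (1/ε) * ∫ t in (0:ℝ)..T, exp (η * ‖ψ t‖)

variable {ε η T : ℝ} {ψ : ℝ → H}

lemma pathCost_nonneg (hε : 0 ≤ ε) (hT : 0 ≤ T) : 0 ≤ pathCost ε η ψ T :=
  mul_nonneg (by positivity) (intervalIntegral.integral_nonneg hT fun _ _ => (exp_pos _).le)

lemma intervalIntegrable_exp_mul_norm (hT : 0 ≤ T) (hψ : ContinuousOn ψ (Icc 0 T)) :
    IntervalIntegrable (fun t => exp (η * ‖ψ t‖)) MeasureTheory.volume 0 T :=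
  (continuous_exp.comp_continuousOn (continuousOn_const.mul hψ.norm)).intervalIntegrable_of_Icc hT

lemma le_pathCost (hε : 0 ≤ ε) (hη : 0 ≤ η) (hT : 0 ≤ T) (hψ : ContinuousOn ψ (Icc 0 T))
    {m : ℝ} (hm : ∀ t ∈ Icc 0 T, m ≤ ‖ψ t‖) : T / ε * exp (η * m) ≤ pathCost ε η ψ T := by
  have hint : ∫ _ in (0:ℝ)..T, exp (η * m) ≤ ∫ t in (0:ℝ)..T, exp (η * ‖ψ t‖) :=
    intervalIntegral.integral_mono_on hT intervalIntegrable_const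
      (intervalIntegrable_exp_mul_norm hT hψ)
      fun t ht => exp_le_exp.2 (mul_le_mul_of_nonneg_left (hm t ht) hη)
  rw [intervalIntegral.integral_const, smul_eq_mul, sub_zero] at hint
  calc T / ε * exp (η * m) = 1 / ε * (T * exp (η * m)) := by ring
    _ ≤ _ := mul_le_mul_of_nonneg_left hint (by positivity)

lemma pathCost_le (hε : 0 ≤ ε) (hη : 0 ≤ η) (hT : 0 ≤ T) (hψ : ContinuousOn ψ (Icc 0 T))
    {B : ℝ} (hB : ∀ t ∈ Icc 0 T, ‖ψ t‖ ≤ B) : pathCost ε η ψ T ≤ T / ε * exp (η * B) := by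
  have hint : ∫ t in (0:ℝ)..T, exp (η * ‖ψ t‖) ≤ ∫ _ in (0:ℝ)..T, exp (η * B) :=
    intervalIntegral.integral_mono_on hT (intervalIntegrable_exp_mul_norm hT hψ)
      intervalIntegrable_const
      fun t ht => exp_le_exp.2 (mul_le_mul_of_nonneg_left (hB t ht) hη)
  rw [intervalIntegral.integral_const, smul_eq_mul, sub_zero] at hint
  calc 1 / ε * ∫ t in (0:ℝ)..T, exp (η * ‖ψ t‖) ≤ 1 / ε * (T * exp (η * B)) :=
        mul_le_mul_of_nonneg_left hint (by positivity)
    _ = T / ε * exp (η * B) := by ring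

end Cost

lemma lower_bound_le_of_cost_lt_one {ε η T d M : ℝ} (hε : 0 < ε) (hη : 0 ≤ η) (hd : 0 ≤ d)
    (hdT : d ≤ T) (h : T / ε * exp (η * max (M - T) 0) < 1) :
    d / ε * exp (η * max (M - ε * exp (-η * max (M - ε) 0)) 0)
      ≤ T / ε * exp (η * max (M - T) 0) := by
  have hT : 0 ≤ T := hd.trans hdT
  have hTε : T < ε := by
    have : T / ε < 1 := lt_of_le_of_lt (le_mul_of_one_le_right (by positivity)
      (one_le_exp (by positivity))) h
    rwa [div_lt_one hε] at this
  have hTJ : T ≤ ε * exp (-η * max (M - ε) 0) := by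
    have : T / ε * exp (η * max (M - ε) 0) < 1 := lt_of_le_of_lt (by gcongr) h
    rw [neg_mul, exp_neg, ← div_eq_mul_inv, le_div_iff₀ (exp_pos _)]
    rw [div_mul_eq_mul_div, div_lt_one hε] at this
    exact this.le
  gcongr

section Paths

variable {H : Type*} [NormedAddCommGroup H] [NormedSpace ℝ H]

def IsUnitSpeedOn (ψ ψ' : ℝ → H) (T : ℝ) : Prop :=
  ∀ t ∈ Icc (0:ℝ) T, HasDerivAt ψ (ψ' t) t ∧ ‖ψ' t‖ = 1

def pathCosts (ε η : ℝ) (x y : H) : Set ℝ :=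
  { r | ∃ T : ℝ, 0 < T ∧ ∃ ψ ψ' : ℝ → H, ψ 0 = x ∧ ψ T = y ∧ IsUnitSpeedOn ψ ψ' T ∧
    r = pathCost ε η ψ T }

variable {ε η T : ℝ} {ψ ψ' : ℝ → H}

lemma IsUnitSpeedOn.continuousOn (h : IsUnitSpeedOn ψ ψ' T) : ContinuousOn ψ (Icc 0 T) :=
  fun t ht => (h t ht).1.continuousAt.continuousWithinAt

lemma IsUnitSpeedOn.norm_sub_le (h : IsUnitSpeedOn ψ ψ' T) {s t : ℝ}
    (hs : s ∈ Icc 0 T) (ht : t ∈ Icc 0 T) (hst : s ≤ t) : ‖ψ t - ψ s‖ ≤ t - s := by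
  simpa [abs_of_nonneg (sub_nonneg.2 hst)] using
    (convex_Icc 0 T).norm_image_sub_le_of_norm_hasDerivWithin_le
      (fun u hu => (h u hu).1.hasDerivWithinAt) (fun u hu => (h u hu).2.le) hs ht

lemma IsUnitSpeedOn.norm_sub_le_length (h : IsUnitSpeedOn ψ ψ' T) (hT : 0 ≤ T) :
    ‖ψ 0 - ψ T‖ ≤ T := by
  simpa [norm_sub_rev] using h.norm_sub_le (left_mem_Icc.2 hT) (right_mem_Icc.2 hT) hT

lemma IsUnitSpeedOn.sub_length_le_norm (h : IsUnitSpeedOn ψ ψ' T) {t : ℝ} (ht : t ∈ Icc 0 T) :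
    max ‖ψ 0‖ ‖ψ T‖ - T ≤ ‖ψ t‖ := by
  have hT : 0 ≤ T := ht.1.trans ht.2
  have h0 := h.norm_sub_le (left_mem_Icc.2 hT) ht ht.1
  have h1 := h.norm_sub_le ht (right_mem_Icc.2 hT) ht.2
  have := norm_le_norm_add_norm_sub' (ψ 0) (ψ t)
  have := norm_le_norm_add_norm_sub' (ψ T) (ψ t)
  rw [norm_sub_rev] at h0
  rw [sub_le_iff_le_add, max_le_iff]
  constructor <;> linarith [ht.1, ht.2]

lemma nonneg_of_mem_pathCosts (hε : 0 ≤ ε) {x y : H} : ∀ r ∈ pathCosts ε η x y, 0 ≤ r := by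
  rintro r ⟨T, hT, ψ, ψ', -, -, -, rfl⟩
  exact pathCost_nonneg hε hT.le

lemma bddBelow_pathCosts (hε : 0 ≤ ε) (x y : H) : BddBelow (pathCosts ε η x y) :=
  ⟨0, nonneg_of_mem_pathCosts hε⟩

lemma lower_bound_le_of_mem_pathCosts (hε : 0 < ε) (hη : 0 ≤ η) {x y : H} {r : ℝ}
    (hr : r ∈ pathCosts ε η x y) (hr1 : r < 1) :
    ‖x - y‖ / ε * exp (η * max (max ‖x‖ ‖y‖ - ε * exp (-η * max (max ‖x‖ ‖y‖ - ε) 0)) 0)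
      ≤ r := by
  obtain ⟨T, hT, ψ, ψ', rfl, rfl, hψ, rfl⟩ := hr
  have hcost : T / ε * exp (η * max (max ‖ψ 0‖ ‖ψ T‖ - T) 0) ≤ pathCost ε η ψ T :=
    le_pathCost hε.le hη hT.le hψ.continuousOn
      fun t ht => max_le (hψ.sub_length_le_norm ht) (norm_nonneg _)
  exact (lower_bound_le_of_cost_lt_one hε hη (norm_nonneg _) (hψ.norm_sub_le_length hT.le)
    (hcost.trans_lt hr1)).trans hcost

lemma exists_segment_mem_pathCosts (hε : 0 ≤ ε) (hη : 0 ≤ η) {x y : H} (hxy : x ≠ y) :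
    ∃ r ∈ pathCosts ε η x y, r ≤ ‖x - y‖ / ε * exp (η * max ‖x‖ ‖y‖) := by
  set L := ‖y - x‖
  have hL : 0 < L := norm_pos_iff.2 (sub_ne_zero.2 hxy.symm)
  set v : H := L⁻¹ • (y - x)
  have hv : ‖v‖ = 1 := by simp [v, norm_smul, hL.ne', L]
  have hψ : IsUnitSpeedOn (fun t => x + t • v) (fun _ => v) L := fun t _ =>
    ⟨by simpa using ((hasDerivAt_id t).smul_const v).const_add x, hv⟩
  have hend : x + L • v = y := by simp [v, smul_smul, hL.ne']
  have hseg : ∀ t ∈ Icc 0 L, ‖x + t • v‖ ≤ max ‖x‖ ‖y‖ := fun t ht =>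
    (convexOn_norm convex_univ).le_on_segment trivial trivial <| by
      rw [segment_eq_image']
      refine ⟨t / L, ⟨div_nonneg ht.1 hL.le, (div_le_one hL).2 ht.2⟩, ?_⟩
      simp only [v, smul_smul, div_eq_mul_inv]
  refine ⟨_, ⟨L, hL, _, _, by simp, hend, hψ, rfl⟩, ?_⟩
  rw [norm_sub_rev]
  exact pathCost_le hε hη hL.le hψ.continuousOn hseg

end Paths

section InnerProduct

variable {H : Type*} [NormedAddCommGroup H] [InnerProductSpace ℝ H] {ε η : ℝ}

lemma IsUnitSpeedOn.exists_orthonormal_of_loop {ψ ψ' : ℝ → H} {T : ℝ}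
    (hψ : IsUnitSpeedOn ψ ψ' T) (hT : 0 < T) (hloop : ψ 0 = ψ T) :
    ∃ e₁ e₂ : H, ‖e₁‖ = 1 ∧ ‖e₂‖ = 1 ∧ ⟪e₁, e₂⟫ = 0 := by
  set u := ψ' 0
  have hderiv : ∀ t ∈ Icc 0 T, HasDerivAt (fun s => ⟪ψ s, u⟫) ⟪ψ' t, u⟫ t := fun t ht => by
    simpa using (hψ t ht).1.inner ℝ (hasDerivAt_const t u)
  obtain ⟨c, hc, hc0⟩ := exists_hasDerivAt_eq_zero hT
    (fun t ht => (hderiv t ht).continuousAt.continuousWithinAt) (by simp only [hloop])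
    fun t ht => hderiv t (Ioo_subset_Icc_self ht)
  exact ⟨u, ψ' c, (hψ 0 (left_mem_Icc.2 hT.le)).2, (hψ c (Ioo_subset_Icc_self hc)).2,
    by rwa [real_inner_comm]⟩

lemma norm_smul_add_smul_of_orthonormal {e₁ e₂ : H} (he₁ : ‖e₁‖ = 1) (he₂ : ‖e₂‖ = 1)
    (he : ⟪e₁, e₂⟫ = 0) (a b : ℝ) : ‖a • e₁ + b • e₂‖ = √(a ^ 2 + b ^ 2) := by
  have h := norm_add_sq_eq_norm_sq_add_norm_sq_real
    (by rw [real_inner_smul_left, real_inner_smul_right, he]; ring : ⟪a • e₁, b • e₂⟫ = 0)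
  rw [← Real.sqrt_sq (norm_nonneg _), sq, h]
  simp [norm_smul, he₁, he₂, ← sq]

lemma exists_circle_mem_pathCosts (hε : 0 ≤ ε) (hη : 0 ≤ η) (x : H) {e₁ e₂ : H}
    (he₁ : ‖e₁‖ = 1) (he₂ : ‖e₂‖ = 1) (he : ⟪e₁, e₂⟫ = 0) {ρ : ℝ} (hρ : 0 < ρ) :
    ∃ r ∈ pathCosts ε η x x, r ≤ 2 * π * ρ / ε * exp (η * (‖x‖ + 3 * ρ)) := by
  set ψ : ℝ → H := fun t => x + ((ρ * (cos (t / ρ) - 1)) • e₁ + (ρ * sin (t / ρ)) • e₂)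
  have hψ : IsUnitSpeedOn ψ (fun t => (-sin (t / ρ)) • e₁ + cos (t / ρ) • e₂) (2 * π * ρ) := by
    intro t _
    refine ⟨?_, by rw [norm_smul_add_smul_of_orthonormal he₁ he₂ he]; simp⟩
    have hθ : HasDerivAt (fun s => s / ρ) ρ⁻¹ t := by
      simpa [div_eq_mul_inv] using (hasDerivAt_id t).div_const ρ
    have hc := ((hasDerivAt_cos _).comp t hθ).sub_const 1 |>.const_mul ρ
    have hs := ((hasDerivAt_sin _).comp t hθ).const_mul ρ
    convert ((hc.smul_const e₁).add (hs.smul_const e₂)).const_add x using 2 <;>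
      first | rfl | field_simp [hρ.ne']
  have hnorm : ∀ t ∈ Icc 0 (2 * π * ρ), ‖ψ t‖ ≤ ‖x‖ + 3 * ρ := by
    intro t _
    have hcos : |cos (t / ρ) - 1| ≤ 2 := abs_le.2
      ⟨by linarith [neg_one_le_cos (t / ρ)], by linarith [cos_le_one (t / ρ)]⟩
    have hsin := abs_sin_le_one (t / ρ)
    calc ‖ψ t‖ ≤ ‖x‖ + (‖(ρ * (cos (t / ρ) - 1)) • e₁‖ + ‖(ρ * sin (t / ρ)) • e₂‖) :=
          (norm_add_le _ _).trans (add_le_add le_rfl (norm_add_le _ _))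
      _ = ‖x‖ + (ρ * |cos (t / ρ) - 1| + ρ * |sin (t / ρ)|) := by
          simp [norm_smul, he₁, he₂, abs_of_pos hρ]
      _ ≤ ‖x‖ + 3 * ρ := by nlinarith
  refine ⟨_, ⟨2 * π * ρ, by positivity, ψ, _, by simp [ψ], by simp [ψ, hρ.ne'], hψ, rfl⟩, ?_⟩
  exact pathCost_le hε hη (by positivity) hψ.continuousOn hnorm

lemma pathDist_self (hε : 0 < ε) (hη : 0 ≤ η) (x : H) : pathDist ε η x x = 0 := by
  change sInf (pathCosts ε η x x) = 0
  rcases (pathCosts ε η x x).eq_empty_or_nonempty with hempty | ⟨_, T, hT, ψ, ψ', h0, hT', hψ, -⟩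
  · rw [hempty, Real.sInf_empty]
  obtain ⟨e₁, e₂, he₁, he₂, he⟩ :=
    IsUnitSpeedOn.exists_orthonormal_of_loop hψ hT (h0.trans hT'.symm)
  refine le_antisymm ?_ (Real.sInf_nonneg (nonneg_of_mem_pathCosts hε.le))
  have hlim : Tendsto (fun ρ => 2 * π * ρ / ε * exp (η * (‖x‖ + 3 * ρ))) (𝓝[>] 0) (𝓝 0) := by
    have hcont : Continuous fun ρ => 2 * π * ρ / ε * exp (η * (‖x‖ + 3 * ρ)) := by fun_prop
    simpa using (hcont.tendsto 0).mono_left nhdsWithin_le_nhds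
  refine ge_of_tendsto hlim (eventually_nhdsWithin_of_forall fun ρ hρ => ?_)
  obtain ⟨r, hr, hrle⟩ := exists_circle_mem_pathCosts hε.le hη x he₁ he₂ he hρ
  exact (csInf_le (bddBelow_pathCosts hε.le x x) hr).trans hrle

lemma pathDist_le (hε : 0 < ε) (hη : 0 ≤ η) (x y : H) :
    pathDist ε η x y ≤ ‖x - y‖ / ε * exp (η * max ‖x‖ ‖y‖) := by
  rcases eq_or_ne x y with rfl | hxy
  · simp [pathDist_self hε hη]
  obtain ⟨r, hr, hrle⟩ := exists_segment_mem_pathCosts hε.le hη hxy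
  exact (csInf_le (bddBelow_pathCosts hε.le x y) hr).trans hrle

lemma le_pathDist_of_lt_one (hε : 0 < ε) (hη : 0 ≤ η) (x y : H) (h : pathDist ε η x y < 1) :
    ‖x - y‖ / ε * exp (η * max (max ‖x‖ ‖y‖ - ε * exp (-η * max (max ‖x‖ ‖y‖ - ε) 0)) 0)
      ≤ pathDist ε η x y := by
  rcases eq_or_ne x y with rfl | hxy
  · simp [pathDist_self hε hη]
  obtain ⟨r, hr, -⟩ := exists_segment_mem_pathCosts hε.le hη hxy
  exact le_csInf_of_forall_lt_imp_le ⟨r, hr⟩ (bddBelow_pathCosts hε.le x y) h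
    fun r hr hr1 => lower_bound_le_of_mem_pathCosts hε hη hr hr1

end InnerProduct

/-- Two-sided bound for the weighted path distance `d̄`:
`d̄(x,y) ≤ (‖x−y‖/ε) exp(η(‖x‖∨‖y‖))` always, and whenever `d̄(x,y) < 1`,
`d̄(x,y) ≥ (‖x−y‖/ε) exp(η max(‖x‖∨‖y‖ − J, 0))` with
`J = ε exp(−η max(‖x‖∨‖y‖ − ε, 0))`. -/
theorem stmt_15 {H : Type*} [NormedAddCommGroup H] [InnerProductSpace ℝ H]
    (ε η : ℝ) (hε : 0 < ε) (hη : 0 < η) (x y : H) :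
    pathDist ε η x y ≤ (‖x - y‖ / ε) * exp (η * max ‖x‖ ‖y‖) ∧
    (pathDist ε η x y < 1 →
      (‖x - y‖ / ε) *
          exp (η * max (max ‖x‖ ‖y‖ - ε * exp (-η * max (max ‖x‖ ‖y‖ - ε) 0)) 0)
        ≤ pathDist ε η x y) :=
  ⟨pathDist_le hε hη.le x y, le_pathDist_of_lt_one hε hη.le x y⟩
end

section
/- Let {Xⁿ} be a Markov chain on a metric-like space (H, d̃) admitting the following property: for every pair of initial points there is a coupling (Xⁿ, Yⁿ) with E[d̃(Xⁿ, Yⁿ)] ≤ C rⁿ d̃(X⁰, Y⁰) for some C > 0 and 0 < r < 1. Suppose h : H → ℝ is Lipschitz with constant L with respect to d̃, the chain has unique invariant measure μ with full support, and Birkhoff's ergodic theorem gives (1/n)∑_{i=1}^n h(Yⁱ) → E_μ h a.s. for μ-a.e. starting point Y⁰. Then for EVERY deterministic starting point X⁰ ∈ H, (1/n)∑_{i=1}^n h(Xⁱ) → E_μ h almost surely. -/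
open MeasureTheory Filter

/-- Strong law of large numbers for every initial condition: if the chain `X`
started at an arbitrary point `x` can, for every point `y` of a "good" set `G`
(where Birkhoff's theorem applies) arbitrarily close to `x` (full support of `μ`),
be coupled with a chain `Y` started at `y` so that
`E[d̃(Xⁿ,Yⁿ)] ≤ C rⁿ d̃(x,y)`, and `h` is `d̃`-Lipschitz with constant `L`, then
`(1/n) ∑_{i=1}^n h(Xⁱ) → E_μ h` almost surely. -/
theorem stmt_19 {H : Type*} [MeasurableSpace H] (dt : H → H → ℝ)
    (hd0 : ∀ a b, 0 ≤ dt a b)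
    (μ : Measure H) [IsProbabilityMeasure μ]
    (h : H → ℝ) (L : ℝ) (hL : 0 ≤ L) (hLip : ∀ a b, |h a - h b| ≤ L * dt a b)
    (hμint : Integrable h μ)
    (C r : ℝ) (hC : 0 < C) (hr : r ∈ Set.Ioo (0:ℝ) 1)
    {Ω : Type*} [MeasurableSpace Ω] (P : Measure Ω) [IsProbabilityMeasure P]
    (x : H) (X : ℕ → Ω → H) (hX0 : ∀ ω, X 0 ω = x)
    (G : Set H)
    (hfullsupp : ∀ t : ℝ, 0 < t → ∃ y ∈ G, dt x y ≤ t)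
    (hcoupling : ∀ y ∈ G, ∃ Y : ℕ → Ω → H,
      (∀ ω, Y 0 ω = y) ∧
      (∀ n : ℕ, Integrable (fun ω => dt (X n ω) (Y n ω)) P) ∧
      (∀ n : ℕ, ∫ ω, dt (X n ω) (Y n ω) ∂P ≤ C * r ^ n * dt x y) ∧
      (∀ᵐ ω ∂P, Tendsto
        (fun n : ℕ => (1 / (n:ℝ)) * ∑ i ∈ Finset.range n, h (Y (i+1) ω))
        atTop (nhds (∫ z, h z ∂μ)))) :
    ∀ᵐ ω ∂P, Tendsto
      (fun n : ℕ => (1 / (n:ℝ)) * ∑ i ∈ Finset.range n, h (X (i+1) ω))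
      atTop (nhds (∫ z, h z ∂μ)) := by
  obtain ⟨y, hyG, -⟩ := hfullsupp 1 one_pos
  obtain ⟨Y, hY0, hint, hbound, hBirk⟩ := hcoupling y hyG
  set d : ℕ → Ω → ℝ := fun n ω => dt (X n ω) (Y n ω) with hd
  -- a.e. summability of the coupling distances
  have hmeas : ∀ n, AEMeasurable (fun ω => d n ω) P := fun n => (hint n).aemeasurable
  have hnonneg : ∀ n ω, 0 ≤ d n ω := fun n ω => hd0 _ _
  have hsum_lint : ∫⁻ ω, ∑' n, ENNReal.ofReal (d n ω) ∂P ≠ ⊤ := by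
    rw [lintegral_tsum (fun n => (hmeas n).ennreal_ofReal)]
    have hle : ∀ n, ∫⁻ ω, ENNReal.ofReal (d n ω) ∂P ≤
        ENNReal.ofReal (C * r ^ n * dt x y) := by
      intro n
      rw [← ofReal_integral_eq_lintegral_ofReal (hint n)
        (Filter.Eventually.of_forall fun ω => hnonneg n ω)]
      exact ENNReal.ofReal_le_ofReal (hbound n)
    refine lt_of_le_of_lt (ENNReal.tsum_le_tsum hle) ?_ |>.ne
    have hsummable : Summable (fun n : ℕ => C * r ^ n * dt x y) := by
      have := (summable_geometric_of_lt_one hr.1.le hr.2).mul_left C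
      simpa [mul_comm, mul_assoc, mul_left_comm] using this.mul_right (dt x y)
    calc ∑' n, ENNReal.ofReal (C * r ^ n * dt x y)
        = ENNReal.ofReal (∑' n, C * r ^ n * dt x y) := by
          rw [ENNReal.ofReal_tsum_of_nonneg
            (fun n => mul_nonneg (mul_nonneg hC.le (pow_nonneg hr.1.le n)) (hd0 x y)) hsummable]
      _ < ⊤ := ENNReal.ofReal_lt_top
  have hae : ∀ᵐ ω ∂P, Summable (fun n => d n ω) := by
    have hfin : ∀ᵐ ω ∂P, (∑' n, ENNReal.ofReal (d n ω)) < ⊤ :=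
      ae_lt_top' (AEMeasurable.ennreal_tsum fun n => (hmeas n).ennreal_ofReal) hsum_lint
    filter_upwards [hfin] with ω hω
    have := ENNReal.summable_toReal hω.ne
    refine this.congr fun n => ?_
    simp [ENNReal.toReal_ofReal (hnonneg n ω)]
  filter_upwards [hae, hBirk] with ω hs hY
  -- the shifted sequence is summable
  have hs' : Summable (fun i => d (i + 1) ω) :=
    hs.comp_injective (add_left_injective 1)
  set T : ℝ := ∑' i, d (i + 1) ω with hT
  -- difference of Cesàro means tends to 0
  have hdiff : Tendsto (fun n : ℕ =>
      (1 / (n:ℝ)) * ∑ i ∈ Finset.range n, h (X (i+1) ω)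
      - (1 / (n:ℝ)) * ∑ i ∈ Finset.range n, h (Y (i+1) ω)) atTop (nhds 0) := by
    rw [tendsto_zero_iff_abs_tendsto_zero]
    refine squeeze_zero (fun n => abs_nonneg _) (g := fun n : ℕ => L * T / n) ?_ ?_
    · intro n
      rcases Nat.eq_zero_or_pos n with hn | hn
      · simp [hn]
      simp only [Function.comp]
      have hnp : (0:ℝ) < n := by exact_mod_cast hn
      rw [← mul_sub, ← Finset.sum_sub_distrib, abs_mul, abs_of_pos (by positivity : (0:ℝ) < 1/n)]
      have h1 : |∑ i ∈ Finset.range n, (h (X (i+1) ω) - h (Y (i+1) ω))| ≤ L * T := by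
        refine le_trans (Finset.abs_sum_le_sum_abs _ _) ?_
        refine le_trans (Finset.sum_le_sum (fun i _ => hLip (X (i+1) ω) (Y (i+1) ω))) ?_
        rw [← Finset.mul_sum]
        refine mul_le_mul_of_nonneg_left ?_ hL
        exact Summable.sum_le_tsum _ (fun i _ => hnonneg _ ω) hs'
      calc (1/(n:ℝ)) * |∑ i ∈ Finset.range n, (h (X (i+1) ω) - h (Y (i+1) ω))|
          ≤ (1/(n:ℝ)) * (L * T) := by
            exact mul_le_mul_of_nonneg_left h1 (by positivity)
        _ = L * T / n := by ring
    · exact tendsto_const_div_atTop_nhds_zero_nat (L * T)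
  have := hY.add hdiff
  rw [add_zero] at this
  refine this.congr fun n => by ring
end
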